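/- (Orthogonal Procrustes problem) Let M be a real n×r matrix with n ≥ r, and let M = PΣQᵀ be a singular value decomposition with P ∈ ℝ^{n×r} having orthonormal columns, Σ diagonal with nonnegative entries, and Q ∈ ℝ^{r×r} orthogonal. Then U* = PQᵀ maximizes trace(UᵀM) over all n×r matrices U with orthonormal columns (UᵀU = I_r), and the maximum value equals the sum of the singular values of M. -/
import Mathlib


open Matrix

private lemma col_norm_one {n r : ℕ} (A : Matrix (Fin n) (Fin r) ℝ)
    (hA : Aᵀ * A = 1) (i : Fin r) : ∑ j, A j i * A j i = 1 := by
  have := congrArg (fun B => B i i) hA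
  simpa [Matrix.mul_apply, Matrix.one_apply, mul_comm] using this

private lemma trace_mul_diag {r : ℕ} (B : Matrix (Fin r) (Fin r) ℝ) (σ : Fin r → ℝ) :
    Matrix.trace (B * Matrix.diagonal σ) = ∑ i, B i i * σ i := by
  simp [Matrix.trace, Matrix.diag, Matrix.mul_apply, Matrix.diagonal]

/-- **Orthogonal Procrustes.** Let `M = P Σ Qᵀ` be an SVD of the `n × r` real matrix
`M` (with `n ≥ r`), where `P` has orthonormal columns (`Pᵀ P = 1`), `Σ = diagonal σ`
with nonnegative entries, and `Q` is orthogonal. Then `U* = P Qᵀ` maximizes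
`trace (Uᵀ M)` over all `n × r` matrices `U` with orthonormal columns (`Uᵀ U = 1`),
and the maximum value equals the sum of the singular values `∑ σᵢ`. -/
theorem orthogonal_procrustes {n r : ℕ} (hnr : r ≤ n)
    (M P : Matrix (Fin n) (Fin r) ℝ) (σ : Fin r → ℝ) (Q : Matrix (Fin r) (Fin r) ℝ)
    (hP : Pᵀ * P = 1) (hσ : ∀ i, 0 ≤ σ i)
    (hQ : Qᵀ * Q = 1 ∧ Q * Qᵀ = 1)
    (hSVD : M = P * Matrix.diagonal σ * Qᵀ) :
    (∀ U : Matrix (Fin n) (Fin r) ℝ, Uᵀ * U = 1 →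
        Matrix.trace (Uᵀ * M) ≤ Matrix.trace ((P * Qᵀ)ᵀ * M)) ∧
    Matrix.trace ((P * Qᵀ)ᵀ * M) = ∑ i, σ i := by
  obtain ⟨hQ1, hQ2⟩ := hQ
  have hval : Matrix.trace ((P * Qᵀ)ᵀ * M) = ∑ i, σ i := by
    have : (P * Qᵀ)ᵀ * M = Q * Matrix.diagonal σ * Qᵀ := by
      rw [hSVD, Matrix.transpose_mul, Matrix.transpose_transpose]
      calc Q * Pᵀ * (P * Matrix.diagonal σ * Qᵀ)
          = Q * (Pᵀ * P) * Matrix.diagonal σ * Qᵀ := by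
            simp only [Matrix.mul_assoc]
        _ = Q * Matrix.diagonal σ * Qᵀ := by rw [hP]; simp [Matrix.mul_assoc]
    rw [this, Matrix.trace_mul_cycle, hQ1, Matrix.one_mul, Matrix.trace_diagonal]
  refine ⟨fun U hU => ?_, hval⟩
  rw [hval]
  have hUQ : (U * Q)ᵀ * (U * Q) = 1 := by
    rw [Matrix.transpose_mul]
    calc Qᵀ * Uᵀ * (U * Q) = Qᵀ * (Uᵀ * U) * Q := by simp only [Matrix.mul_assoc]
      _ = 1 := by rw [hU, Matrix.mul_one, hQ1]
  have key : ∀ i, (Qᵀ * Uᵀ * P) i i ≤ 1 := by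
    intro i
    have h1 : ∑ j, (U * Q) j i * (U * Q) j i = 1 := col_norm_one _ hUQ i
    have h2 : ∑ j, P j i * P j i = 1 := col_norm_one _ hP i
    have hdiag : (Qᵀ * Uᵀ * P) i i = ∑ j, (U * Q) j i * P j i := by
      simp [Matrix.mul_apply, Finset.sum_mul, mul_comm, mul_left_comm]
    have hcs := Finset.sum_mul_sq_le_sq_mul_sq (Finset.univ : Finset (Fin n))
      (fun j => (U * Q) j i) (fun j => P j i)
    rw [hdiag]
    simp only [← sq] at h1 h2
    simp only [h1, h2, one_mul] at hcs
    nlinarith [hcs]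
  have htr : Matrix.trace (Uᵀ * M) = ∑ i, (Qᵀ * Uᵀ * P) i i * σ i := by
    rw [hSVD, ← Matrix.mul_assoc, ← Matrix.mul_assoc, Matrix.trace_mul_cycle,
      ← Matrix.mul_assoc, trace_mul_diag]
  rw [htr]
  exact Finset.sum_le_sum fun i _ => by
    nlinarith [key i, hσ i, mul_le_mul_of_nonneg_right (key i) (hσ i)]
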